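/- If (A₁, F) and (A₂, G) are finite Ramsey algebras over the same language, then their Cartesian product (A₁ × A₂, F × G) with coordinatewise operations is a Ramsey algebra. -/

import Mathlib

namespace RamseyAlg

/- Orderly-term syntax trees over an operation-index type `ι`:
`leaf` is the identity (a single variable), `node g f` applies the basic
operation `g` to the results of the trees in the forest `f`. -/
mutual
  inductive OTree (ι : Type) : Type
    | leaf : OTree ι
    | node : ι → OForest ι → OTree ι
  inductive OForest (ι : Type) : Type
    | nil : OForest ι
    | cons : OTree ι → OForest ι → OForest ι
end

def OForest.length {ι : Type} : OForest ι → ℕ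
  | .nil => 0
  | .cons _ f => f.length + 1

/- Well-formedness: each node applies a `k`-ary basic operation to exactly
`k` subtrees, where `ar` gives the arities. -/
mutual
  def OTree.WF {ι : Type} (ar : ι → ℕ) : OTree ι → Prop
    | .leaf => True
    | .node g f => OForest.length f = ar g ∧ OForest.WF ar f
  def OForest.WF {ι : Type} (ar : ι → ℕ) : OForest ι → Prop
    | .nil => True
    | .cons t f => OTree.WF ar t ∧ OForest.WF ar f
end

/- Evaluation of an orderly term on an input list: the variables of the term
consume an initial segment of the list, in order, each exactly once; what
remains of the list is returned alongside the value. -/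
mutual
  def OTree.evalAux {ι A : Type} (F : ι → List A → A) :
      OTree ι → List A → Option (A × List A)
    | .leaf, [] => none
    | .leaf, a :: rest => some (a, rest)
    | .node g f, l =>
      match OForest.evalAux F f l with
      | none => none
      | some (rs, rest) => some (F g rs, rest)
  def OForest.evalAux {ι A : Type} (F : ι → List A → A) :
      OForest ι → List A → Option (List A × List A)
    | .nil, l => some ([], l)
    | .cons t f, l =>
      match OTree.evalAux F t l with
      | none => none
      | some (r, rest) =>
        match OForest.evalAux F f rest with
        | none => none
        | some (rs, rest') => some (r :: rs, rest')
end

/- The value of the orderly term `t` on the finite sequence `l`, defined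
exactly when the variables of `t` consume all of `l`. -/
def OTree.eval {ι A : Type} (F : ι → List A → A) (t : OTree ι) (l : List A) :
    Option A :=
  match OTree.evalAux F t l with
  | some (a, []) => some a
  | _ => none

/- `Reduction ar F a b` : `a` is a reduction of `b` with respect to `F`, i.e.
there are well-formed orderly terms `t j` applied to consecutive disjoint
finite subsequences of `b` (extracted by the strictly monotone `e`, in blocks
of lengths `len j`) producing the terms of `a` in order. -/
def Reduction {ι A : Type} (ar : ι → ℕ) (F : ι → List A → A)
    (a b : ℕ → A) : Prop :=
  ∃ (t : ℕ → OTree ι) (len : ℕ → ℕ) (e : ℕ → ℕ),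
    StrictMono e ∧ (∀ j, (t j).WF ar) ∧
    ∀ j, (t j).eval F ((List.range (len j)).map
        (fun i => b (e ((∑ m ∈ Finset.range j, len m) + i)))) = some (a j)

/- `FR ar F b` : the set of values of orderly terms over `F` applied to
finite subsequences of `b`. -/
def FR {ι A : Type} (ar : ι → ℕ) (F : ι → List A → A) (b : ℕ → A) : Set A :=
  { x | ∃ (t : OTree ι) (l : List ℕ), t.WF ar ∧ l.Chain' (· < ·) ∧
      t.eval F (l.map b) = some x }

/- `(A, F)` is a Ramsey algebra: every infinite sequence has, for every
`X ⊆ A`, a reduction homogeneous for `X`. -/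
def RamseyAlgebra {ι A : Type} (ar : ι → ℕ) (F : ι → List A → A) : Prop :=
  ∀ (b : ℕ → A) (X : Set A), ∃ a : ℕ → A,
    Reduction ar F a b ∧ (FR ar F a ⊆ X ∨ FR ar F a ∩ X = ∅)

end RamseyAlg


/-!
If `π : A → B` is a homomorphism onto a finite Ramsey algebra, reductions of `π ∘ c` lift to
reductions of `c`, so homogenizing successively for each of the finitely many singletons of `B`
gives a reduction `d` of `c` for which `FR (π ∘ d)` has at most one point. Apply this to the first
projection and then, to the resulting sequence, to the second. Since a reduction of a reduction
is a reduction (substitute the orderly terms into each other) and `FR` shrinks under reduction,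
both coordinates of `FR d` are then constant, so `FR d` is a subsingleton and hence homogeneous
for every `X`.
-/

namespace RamseyAlg

variable {ι A : Type}

theorem OTree.eval_eq_some_iff {F : ι → List A → A} {t : OTree ι} {l : List A} {x : A} :
    t.eval F l = some x ↔ t.evalAux F l = some (x, []) := by
  unfold OTree.eval
  rcases t.evalAux F l with _ | ⟨a, _ | ⟨b, r⟩⟩ <;> simp

mutual
theorem OTree.evalAux_append {F : ι → List A → A} :
    ∀ (t : OTree ι) (l r l' : List A) (x : A),
      t.evalAux F l = some (x, r) → t.evalAux F (l ++ l') = some (x, r ++ l')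
  | .leaf, l, r, l', x => by
    cases l with
    | nil => intro h; simp [OTree.evalAux] at h
    | cons b l =>
      simp only [OTree.evalAux, List.cons_append, Option.some.injEq, Prod.mk.injEq]
      rintro ⟨rfl, rfl⟩
      exact ⟨rfl, rfl⟩
  | .node g f, l, r, l', x => by
    unfold OTree.evalAux
    cases hf : f.evalAux F l with
    | none => simp
    | some p =>
      obtain ⟨xs, rest⟩ := p
      rw [OForest.evalAux_append f l rest l' xs hf]
      simp only [Option.some.injEq, Prod.mk.injEq]
      rintro ⟨rfl, rfl⟩
      exact ⟨rfl, rfl⟩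
theorem OForest.evalAux_append {F : ι → List A → A} :
    ∀ (f : OForest ι) (l r l' : List A) (xs : List A),
      f.evalAux F l = some (xs, r) → f.evalAux F (l ++ l') = some (xs, r ++ l')
  | .nil, l, r, l', xs => by
    simp only [OForest.evalAux, Option.some.injEq, Prod.mk.injEq]
    rintro ⟨rfl, rfl⟩
    exact ⟨rfl, rfl⟩
  | .cons t f, l, r, l', xs => by
    unfold OForest.evalAux
    cases ht : t.evalAux F l with
    | none => simp
    | some p =>
      obtain ⟨x, rest⟩ := p
      rw [OTree.evalAux_append t l rest l' x ht]
      cases hf : f.evalAux F rest with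
      | none => simp [hf]
      | some q =>
        obtain ⟨ys, rest'⟩ := q
        simp only [hf, OForest.evalAux_append f rest rest' l' ys hf, Option.some.injEq,
          Prod.mk.injEq]
        rintro ⟨rfl, rfl⟩
        exact ⟨rfl, rfl⟩
end

mutual
def OTree.subst : OTree ι → List (OTree ι) → OTree ι × List (OTree ι)
  | .leaf, [] => (.leaf, [])
  | .leaf, s :: ss => (s, ss)
  | .node g f, ss => (.node g (f.subst ss).1, (f.subst ss).2)
def OForest.subst : OForest ι → List (OTree ι) → OForest ι × List (OTree ι)
  | .nil, ss => (.nil, ss)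
  | .cons t f, ss => (.cons (t.subst ss).1 (f.subst (t.subst ss).2).1, (f.subst (t.subst ss).2).2)
end

theorem OForest.length_subst : ∀ (f : OForest ι) (ss : List (OTree ι)),
    (f.subst ss).1.length = f.length
  | .nil, _ => rfl
  | .cons _ f, _ => congrArg (· + 1) (OForest.length_subst f _)

mutual
theorem OTree.WF_subst (ar : ι → ℕ) : ∀ (t : OTree ι) (ss : List (OTree ι)),
    t.WF ar → (∀ s ∈ ss, s.WF ar) → (t.subst ss).1.WF ar ∧ ∀ s ∈ (t.subst ss).2, s.WF ar
  | .leaf, [] => fun _ _ => ⟨trivial, by simp [OTree.subst]⟩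
  | .leaf, s :: ss => fun _ h => ⟨h s (.head _), fun u hu => h u (.tail _ hu)⟩
  | .node g f, ss => fun hwf hss =>
    have hf := OForest.WF_subst ar f ss hwf.2 hss
    ⟨⟨(OForest.length_subst f ss).trans hwf.1, hf.1⟩, hf.2⟩
theorem OForest.WF_subst (ar : ι → ℕ) : ∀ (f : OForest ι) (ss : List (OTree ι)),
    f.WF ar → (∀ s ∈ ss, s.WF ar) → (f.subst ss).1.WF ar ∧ ∀ s ∈ (f.subst ss).2, s.WF ar
  | .nil, _ => fun _ h => ⟨trivial, h⟩
  | .cons t f, ss => fun hwf hss =>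
    have ht := OTree.WF_subst ar t ss hwf.1 hss
    have hf := OForest.WF_subst ar f (t.subst ss).2 hwf.2 ht.2
    ⟨⟨ht.1, hf.1⟩, hf.2⟩
end

section Subst

variable {κ : Type} {F : ι → List A → A} {t : κ → OTree ι} {w : κ → List A} {a : κ → A}

mutual
theorem OTree.evalAux_subst (h : ∀ k, (t k).eval F (w k) = some (a k)) :
    ∀ (u : OTree ι) (l : List κ) (x : A) (r : List A), u.evalAux F (l.map a) = some (x, r) →
      ∃ l' : List κ, r = l'.map a ∧ (u.subst (l.map t)).2 = l'.map t ∧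
        (u.subst (l.map t)).1.evalAux F (l.map w).flatten = some (x, (l'.map w).flatten)
  | .leaf, l, x, r => by
    cases l with
    | nil => simp [OTree.evalAux]
    | cons k l =>
      simp only [List.map_cons, OTree.evalAux, Option.some.injEq, Prod.mk.injEq]
      rintro ⟨rfl, rfl⟩
      exact ⟨l, rfl, rfl, OTree.evalAux_append _ _ [] _ _ (OTree.eval_eq_some_iff.mp (h k))⟩
  | .node g f, l, x, r => by
    unfold OTree.evalAux
    cases hf : f.evalAux F (l.map a) with
    | none => simp
    | some p =>
      obtain ⟨xs, rest⟩ := p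
      simp only [Option.some.injEq, Prod.mk.injEq]
      rintro ⟨rfl, rfl⟩
      obtain ⟨l', hr, hrest, hev⟩ := OForest.evalAux_subst h f l xs rest hf
      refine ⟨l', hr, hrest, ?_⟩
      simp only [OTree.subst, hev]
theorem OForest.evalAux_subst (h : ∀ k, (t k).eval F (w k) = some (a k)) :
    ∀ (f : OForest ι) (l : List κ) (xs : List A) (r : List A),
      f.evalAux F (l.map a) = some (xs, r) →
      ∃ l' : List κ, r = l'.map a ∧ (f.subst (l.map t)).2 = l'.map t ∧
        (f.subst (l.map t)).1.evalAux F (l.map w).flatten = some (xs, (l'.map w).flatten)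
  | .nil, l, xs, r => by
    simp only [OForest.evalAux, Option.some.injEq, Prod.mk.injEq]
    rintro ⟨rfl, rfl⟩
    exact ⟨l, rfl, rfl, rfl⟩
  | .cons u f, l, xs, r => by
    unfold OForest.evalAux
    cases hu : u.evalAux F (l.map a) with
    | none => simp
    | some p =>
      obtain ⟨x, rest⟩ := p
      obtain ⟨l₁, rfl, hrest₁, hev₁⟩ := OTree.evalAux_subst h u l x rest hu
      cases hf : f.evalAux F (l₁.map a) with
      | none => simp [hf]
      | some q =>
        obtain ⟨ys, rest'⟩ := q
        simp only [hf, Option.some.injEq, Prod.mk.injEq]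
        rintro ⟨rfl, rfl⟩
        obtain ⟨l₂, hr₂, hrest₂, hev₂⟩ := OForest.evalAux_subst h f l₁ ys rest' hf
        refine ⟨l₂, hr₂, by simp only [OForest.subst, hrest₁, hrest₂], ?_⟩
        simp only [OForest.subst, hev₁, hrest₁, hev₂]
end

theorem OTree.eval_subst (h : ∀ k, (t k).eval F (w k) = some (a k)) {u : OTree ι}
    {l : List κ} {x : A} (hu : u.eval F (l.map a) = some x) :
    (u.subst (l.map t)).1.eval F (l.map w).flatten = some x := by
  obtain ⟨l', hl', -, hev⟩ := OTree.evalAux_subst h u l x [] (OTree.eval_eq_some_iff.mp hu)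
  obtain rfl : l' = [] := List.map_eq_nil_iff.mp hl'.symm
  exact OTree.eval_eq_some_iff.mpr hev

end Subst

theorem exists_strictMono_eqOn {s : Set ℕ} (hs : IsLowerSet s) {f : ℕ → ℕ}
    (hf : StrictMonoOn f s) : ∃ g : ℕ → ℕ, StrictMono g ∧ Set.EqOn g f s := by
  let g : ℕ → ℕ := fun m => Nat.rec (f 0) (fun m gm => max (gm + 1) (f (m + 1))) m
  have hg : ∀ m, g (m + 1) = max (g m + 1) (f (m + 1)) := fun _ => rfl
  refine ⟨g, strictMono_nat_of_lt_succ fun m => ?_, fun m hm => ?_⟩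
  · rw [hg]
    exact lt_max_of_lt_left (Nat.lt_succ_self _)
  induction m with
  | zero => rfl
  | succ m ih =>
    have hm' : m ∈ s := hs (Nat.le_succ m) hm
    rw [hg, ih hm', max_eq_right (hf hm' hm (Nat.lt_succ_self m))]

/-- The consecutive disjoint finite subsequences of indices to which the terms of a reduction
are applied. -/
def IncreasingBlocks (B : ℕ → List ℕ) : Prop :=
  (∀ j, (B j).Pairwise (· < ·)) ∧ ∀ j j', j < j' → ∀ x ∈ B j, ∀ y ∈ B j', x < y

theorem IncreasingBlocks.pairwise_flatten {B : ℕ → List ℕ} (hB : IncreasingBlocks B)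
    {l : List ℕ} (hl : l.Pairwise (· < ·)) : (l.map B).flatten.Pairwise (· < ·) := by
  rw [List.pairwise_flatten, List.pairwise_map]
  exact ⟨by simpa using fun j _ => hB.1 j, hl.imp (hB.2 _ _)⟩

theorem increasingBlocks_of_strictMono {e : ℕ → ℕ} (he : StrictMono e) (len : ℕ → ℕ) :
    IncreasingBlocks fun j =>
      (List.range (len j)).map fun i => e ((∑ m ∈ Finset.range j, len m) + i) := by
  refine ⟨fun j => ?_, fun j j' hjj' x hx y hy => ?_⟩
  · exact List.pairwise_map.mpr (List.pairwise_lt_range.imp fun h => he (by omega))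
  · obtain ⟨i, hi, rfl⟩ := List.mem_map.mp hx
    obtain ⟨i', -, rfl⟩ := List.mem_map.mp hy
    apply he
    have : ∑ m ∈ Finset.range (j + 1), len m ≤ ∑ m ∈ Finset.range j', len m :=
      Finset.sum_le_sum_of_subset (Finset.range_subset_range.mpr hjj')
    rw [Finset.sum_range_succ] at this
    have := List.mem_range.mp hi
    omega

theorem IncreasingBlocks.exists_strictMono {B : ℕ → List ℕ} (hB : IncreasingBlocks B) :
    ∃ e : ℕ → ℕ, StrictMono e ∧ ∀ j,
      (List.range (B j).length).map (fun i => e ((∑ m ∈ Finset.range j, (B m).length) + i))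
        = B j := by
  classical
  let P : ℕ → List ℕ := fun J => ((List.range J).map B).flatten
  have hP_succ : ∀ J, P (J + 1) = P J ++ B J := by simp [P, List.range_succ]
  have hP_length : ∀ J, (P J).length = ∑ m ∈ Finset.range J, (B m).length := by
    intro J
    induction J with
    | zero => rfl
    | succ J ih => rw [hP_succ, List.length_append, ih, Finset.sum_range_succ]
  have hP_prefix : ∀ J J', J ≤ J' → P J <+: P J' := by
    intro J J' h
    induction J', h using Nat.le_induction with
    | base => exact List.prefix_refl _
    | succ J' _ ih => exact hP_succ J' ▸ ih.trans (List.prefix_append _ _)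
  have hP_getElem : ∀ J J' m (h : m < (P J).length) (h' : m < (P J').length),
      (P J)[m] = (P J')[m] := by
    intro J J' m h h'
    rcases le_total J J' with hJ | hJ
    · exact (hP_prefix J J' hJ).getElem h
    · exact ((hP_prefix J' J hJ).getElem h').symm
  -- `f` enumerates the concatenation of all blocks on the initial segment `s` it covers; `s` may
  -- be finite, since blocks can be empty (nullary operations)
  let s : Set ℕ := {m | ∃ J, m < (P J).length}
  let f : ℕ → ℕ := fun m => if h : ∃ J, m < (P J).length then (P h.choose)[m]'h.choose_spec else 0
  have hf : ∀ J m (h : m < (P J).length), f m = (P J)[m] := fun J m h =>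
    (dif_pos ⟨J, h⟩).trans (hP_getElem _ _ _ _ _)
  have hs : IsLowerSet s := fun m m' hm' ⟨J, hJ⟩ => ⟨J, lt_of_le_of_lt hm' hJ⟩
  have hf_mono : StrictMonoOn f s := by
    rintro m ⟨-, -⟩ m' ⟨J, hJ⟩ hmm'
    rw [hf J m (hmm'.trans hJ), hf J m' hJ]
    exact List.pairwise_iff_getElem.mp (hB.pairwise_flatten List.pairwise_lt_range) m m' _ _ hmm'
  obtain ⟨e, he, hef⟩ := exists_strictMono_eqOn hs hf_mono
  refine ⟨e, he, fun j => List.ext_getElem (by simp) fun i hi hi' => ?_⟩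
  have hlt : (∑ m ∈ Finset.range j, (B m).length) + i < (P (j + 1)).length := by
    rw [List.length_map, List.length_range] at hi
    rw [hP_length, Finset.sum_range_succ]
    omega
  simp only [List.getElem_map, List.getElem_range]
  rw [hef ⟨j + 1, hlt⟩, hf (j + 1) _ hlt]
  simp only [hP_succ]
  rw [List.getElem_append_right (by rw [hP_length]; omega)]
  simp [hP_length]

section Reduction

variable {ar : ι → ℕ} {F : ι → List A → A}

theorem reduction_iff_blocks {a b : ℕ → A} :
    Reduction ar F a b ↔ ∃ (t : ℕ → OTree ι) (B : ℕ → List ℕ), IncreasingBlocks B ∧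
      (∀ j, (t j).WF ar) ∧ ∀ j, (t j).eval F ((B j).map b) = some (a j) := by
  constructor
  · rintro ⟨t, len, e, he, hwf, hev⟩
    exact ⟨t, _, increasingBlocks_of_strictMono he len, hwf, fun j => by
      simpa [List.map_map, Function.comp_def] using hev j⟩
  · rintro ⟨t, B, hB, hwf, hev⟩
    obtain ⟨e, he, hBe⟩ := hB.exists_strictMono
    refine ⟨t, fun j => (B j).length, e, he, hwf, fun j => ?_⟩
    have h := hev j
    conv at h => lhs; rw [← hBe j]
    rwa [List.map_map] at h

theorem Reduction.refl (b : ℕ → A) : Reduction ar F b b :=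
  ⟨fun _ => .leaf, fun _ => 1, id, strictMono_id, fun _ => trivial, fun j => by
    simp [OTree.eval, OTree.evalAux, show List.range 1 = [0] from rfl]⟩

theorem Reduction.trans {a b c : ℕ → A} (hab : Reduction ar F a b) (hbc : Reduction ar F b c) :
    Reduction ar F a c := by
  obtain ⟨t, B, hB, hwf, hev⟩ := reduction_iff_blocks.mp hab
  obtain ⟨s, B', hB', hwf', hev'⟩ := reduction_iff_blocks.mp hbc
  refine reduction_iff_blocks.mpr ⟨fun j => ((t j).subst ((B j).map s)).1,
    fun j => ((B j).map B').flatten, ⟨fun j => hB'.pairwise_flatten (hB.1 j), ?_⟩,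
    fun j => (OTree.WF_subst ar _ _ (hwf j) (by simp [hwf'])).1, fun j => ?_⟩
  · intro j j' hjj' x hx y hy
    obtain ⟨_, hkj, hx⟩ := List.mem_flatten.mp hx
    obtain ⟨_, hkj', hy⟩ := List.mem_flatten.mp hy
    obtain ⟨k, hk, rfl⟩ := List.mem_map.mp hkj
    obtain ⟨k', hk', rfl⟩ := List.mem_map.mp hkj'
    exact hB'.2 k k' (hB.2 j j' hjj' k hk k' hk') x hx y hy
  · rw [List.map_flatten, List.map_map]
    exact OTree.eval_subst hev' (hev j)

theorem Reduction.FR_subset {a b : ℕ → A} (h : Reduction ar F a b) : FR ar F a ⊆ FR ar F b := by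
  obtain ⟨t, B, hB, hwf, hev⟩ := reduction_iff_blocks.mp h
  rintro x ⟨u, l, hu, hl, hx⟩
  refine ⟨(u.subst (l.map t)).1, (l.map B).flatten,
    (OTree.WF_subst ar u _ hu (by simp [hwf])).1,
    List.isChain_iff_pairwise.mpr (hB.pairwise_flatten (List.isChain_iff_pairwise.mp hl)), ?_⟩
  rw [List.map_flatten, List.map_map]
  exact OTree.eval_subst hev hx

theorem FR_nonempty (b : ℕ → A) : (FR ar F b).Nonempty :=
  ⟨b 0, .leaf, [0], trivial, List.isChain_singleton _, by simp [OTree.eval, OTree.evalAux]⟩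

end Reduction

section Hom

variable {B C : Type}

def IsHom (π : B → C) (FB : ι → List B → B) (FC : ι → List C → C) : Prop :=
  ∀ i l, π (FB i l) = FC i (l.map π)

variable {π : B → C} {FB : ι → List B → B} {FC : ι → List C → C}

mutual
theorem OTree.evalAux_map (hπ : IsHom π FB FC) : ∀ (t : OTree ι) (l : List B),
    t.evalAux FC (l.map π) = (t.evalAux FB l).map (Prod.map π (List.map π))
  | .leaf, [] => rfl
  | .leaf, _ :: _ => rfl
  | .node g f, l => by
    unfold OTree.evalAux
    rw [OForest.evalAux_map hπ f l]
    rcases f.evalAux FB l with _ | ⟨xs, rest⟩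
    · rfl
    · simp [hπ g xs]
theorem OForest.evalAux_map (hπ : IsHom π FB FC) : ∀ (f : OForest ι) (l : List B),
    f.evalAux FC (l.map π) = (f.evalAux FB l).map (Prod.map (List.map π) (List.map π))
  | .nil, _ => rfl
  | .cons t f, l => by
    unfold OForest.evalAux
    rw [OTree.evalAux_map hπ t l]
    rcases t.evalAux FB l with _ | ⟨x, rest⟩
    · rfl
    · simp only [Option.map_some, Prod.map, OForest.evalAux_map hπ f rest]
      rcases f.evalAux FB rest with _ | ⟨xs, rest'⟩ <;> rfl
end

theorem OTree.eval_map (hπ : IsHom π FB FC) (t : OTree ι) (l : List B) :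
    t.eval FC (l.map π) = (t.eval FB l).map π := by
  unfold OTree.eval
  rw [OTree.evalAux_map hπ t l]
  rcases t.evalAux FB l with _ | ⟨x, _ | ⟨y, r⟩⟩ <;> rfl

theorem isHom_fst :
    IsHom Prod.fst (fun i (l : List (B × C)) => (FB i (l.map Prod.fst), FC i (l.map Prod.snd)))
      FB :=
  fun _ _ => rfl

theorem isHom_snd :
    IsHom Prod.snd (fun i (l : List (B × C)) => (FB i (l.map Prod.fst), FC i (l.map Prod.snd)))
      FC :=
  fun _ _ => rfl

variable {ar : ι → ℕ}

theorem Reduction.map (hπ : IsHom π FB FC) {c b : ℕ → B} (h : Reduction ar FB c b) :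
    Reduction ar FC (π ∘ c) (π ∘ b) := by
  obtain ⟨t, B, hB, hwf, hev⟩ := reduction_iff_blocks.mp h
  refine reduction_iff_blocks.mpr ⟨t, B, hB, hwf, fun j => ?_⟩
  rw [← List.map_map, OTree.eval_map hπ, hev j]
  rfl

theorem Reduction.exists_lift (hπ : IsHom π FB FC) {a : ℕ → C} {b : ℕ → B}
    (h : Reduction ar FC a (π ∘ b)) : ∃ c : ℕ → B, Reduction ar FB c b ∧ π ∘ c = a := by
  obtain ⟨t, B, hB, hwf, hev⟩ := reduction_iff_blocks.mp h
  have hlift : ∀ j, ∃ x, (t j).eval FB ((B j).map b) = some x ∧ π x = a j := fun j => by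
    rw [← Option.map_eq_some_iff, ← OTree.eval_map hπ, List.map_map]
    exact hev j
  choose c hc using hlift
  exact ⟨c, reduction_iff_blocks.mpr ⟨t, B, hB, hwf, fun j => (hc j).1⟩, funext fun j => (hc j).2⟩

theorem mem_FR_comp (hπ : IsHom π FB FC) {b : ℕ → B} {x : B} (h : x ∈ FR ar FB b) :
    π x ∈ FR ar FC (π ∘ b) := by
  obtain ⟨t, l, hwf, hl, hev⟩ := h
  refine ⟨t, l, hwf, hl, ?_⟩
  simpa [List.map_map, Function.comp_def, hev] using OTree.eval_map hπ t (l.map b)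

end Hom

section Ramsey

variable {B : Type} {ar : ι → ℕ} {H : ι → List A → A} {FB : ι → List B → B} {π : A → B}

theorem RamseyAlgebra.exists_reduction_homogeneous_of_isHom (hR : RamseyAlgebra ar FB)
    (hπ : IsHom π H FB) (c : ℕ → A) (X : Set B) :
    ∃ d, Reduction ar H d c ∧ (FR ar FB (π ∘ d) ⊆ X ∨ FR ar FB (π ∘ d) ∩ X = ∅) := by
  obtain ⟨a, ha, hX⟩ := hR (π ∘ c) X
  obtain ⟨d, hd, rfl⟩ := ha.exists_lift hπ
  exact ⟨d, hd, hX⟩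

/-- Homogenize for the singletons of `B` one at a time: unless some stage makes `FR` a
singleton, the last one leaves it disjoint from all of `B`, contradicting nonemptiness. -/
theorem RamseyAlgebra.exists_reduction_subsingleton_FR [Finite B] (hR : RamseyAlgebra ar FB)
    (hπ : IsHom π H FB) (c : ℕ → A) :
    ∃ d, Reduction ar H d c ∧ (FR ar FB (π ∘ d)).Subsingleton := by
  classical
  have := Fintype.ofFinite B
  suffices ∀ S : Finset B, ∃ d, Reduction ar H d c ∧
      ((FR ar FB (π ∘ d)).Subsingleton ∨ Disjoint (FR ar FB (π ∘ d)) S) by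
    obtain ⟨d, hd, hsub | hdisj⟩ := this Finset.univ
    · exact ⟨d, hd, hsub⟩
    · obtain ⟨y, hy⟩ := FR_nonempty (ar := ar) (F := FB) (π ∘ d)
      exact absurd (Finset.mem_coe.mpr (Finset.mem_univ y)) (hdisj.notMem_of_mem_left hy)
  intro S
  induction S using Finset.induction_on with
  | empty => exact ⟨c, Reduction.refl c, Or.inr (by simp)⟩
  | insert x S _ ih =>
    obtain ⟨d, hd, hsub | hdisj⟩ := ih
    · exact ⟨d, hd, Or.inl hsub⟩
    obtain ⟨d', hd', hx | hx⟩ := hR.exists_reduction_homogeneous_of_isHom hπ d {x}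
    · exact ⟨d', hd'.trans hd, Or.inl (Set.subsingleton_of_subset_singleton hx)⟩
    · refine ⟨d', hd'.trans hd, Or.inr ?_⟩
      rw [Finset.coe_insert, Set.disjoint_insert_right]
      exact ⟨Set.inter_singleton_eq_empty.mp hx, hdisj.mono_left (hd'.map hπ).FR_subset⟩

end Ramsey

end RamseyAlg

open RamseyAlg in
/-- The Cartesian product of two finite Ramsey algebras over the same
language (with coordinatewise operations) is a Ramsey algebra. -/
theorem stmt16 (ι A₁ A₂ : Type) [Finite A₁] [Finite A₂] (ar : ι → ℕ)
    (F : ι → List A₁ → A₁) (G : ι → List A₂ → A₂)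
    (h₁ : RamseyAlgebra ar F) (h₂ : RamseyAlgebra ar G) :
    RamseyAlgebra ar
      (fun i (l : List (A₁ × A₂)) => (F i (l.map Prod.fst), G i (l.map Prod.snd))) := by
  intro b X
  obtain ⟨c, hcb, hc⟩ := h₁.exists_reduction_subsingleton_FR (isHom_fst (FC := G)) b
  obtain ⟨d, hdc, hd⟩ := h₂.exists_reduction_subsingleton_FR isHom_snd c
  have hFR : (FR ar _ d).Subsingleton := fun p hp q hq =>
    Prod.ext (hc ((hdc.map isHom_fst).FR_subset (mem_FR_comp isHom_fst hp))
        ((hdc.map isHom_fst).FR_subset (mem_FR_comp isHom_fst hq)))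
      (hd (mem_FR_comp isHom_snd hp) (mem_FR_comp isHom_snd hq))
  refine ⟨d, hdc.trans hcb, ?_⟩
  rcases hFR.eq_empty_or_singleton with h | ⟨x, h⟩ <;> rw [h]
  · simp
  · by_cases hx : x ∈ X <;> simp [hx]
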